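/- Let D = K[y_1,...,y_m]/(y_1^2,...,y_m^2) over a field K of characteristic 0, and let ℓ = y_1 + ⋯ + y_m. Then for every d ≥ 1 and every i, the multiplication map ·ℓ^d : D_i → D_{i+d} has maximal rank (i.e., D has the Strong Lefschetz Property). -/

import Mathlib

open MvPolynomial

noncomputable def gradedPiece {K σ : Type*} [Field K] (I : Ideal (MvPolynomial σ K))
    (n : ℕ) : Submodule K (MvPolynomial σ K ⧸ I) :=
  Submodule.map (Ideal.Quotient.mkₐ K I).toLinearMap (homogeneousSubmodule σ K n)

/-!
The squarefree monomials `y_S` form a basis of `D`, and multiplication by `ℓ` acts on it as the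
up operator `E y_S = ∑_{k ∉ S} y_{S ∪ {k}}` of the Boolean lattice of subsets of the variables.
With the down operator `F y_S = ∑_{k ∈ S} y_{S \ {k}}` one has `(FE - EF) y_S = (m - 2|S|) y_S`,
so the levels `D_j` form an `sl₂`-string of lowest weight `-m`, and the standard `sl₂` descent
shows that `E^d : D_i → D_{i+d}` is injective when `2i + d ≤ m`. The same argument for `F` with
the levels reversed shows that `F^d : D_{i+d} → D_i` is injective when `2i + d ≥ m`; since `F^d`
is the transpose of `E^d` for the pairing in which the `y_S` are orthonormal, `E^d` is then onto.
-/

structure IsSl2Grading {R M : Type*} [CommRing R] [AddCommGroup M] [Module R M]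
    (m : ℕ) (V : ℤ → Submodule R M) (e f : Module.End R M) : Prop where
  lower_eq_zero : ∀ v ∈ V 0, f v = 0
  raise_mem : ∀ j, ∀ v ∈ V j, e v ∈ V (j + 1)
  lower_mem : ∀ j, ∀ v ∈ V (j + 1), f v ∈ V j
  lower_raise_sub : ∀ j, ∀ v ∈ V j, f (e v) - e (f v) = ((m : R) - 2 * j) • v

namespace IsSl2Grading

variable {R M : Type*} [CommRing R] [AddCommGroup M] [Module R M]
  {m : ℕ} {V : ℤ → Submodule R M} {e f : Module.End R M}

theorem pow_apply_mem (h : IsSl2Grading m V e f) (k : ℕ) {j : ℤ} {v : M} (hv : v ∈ V j) :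
    (e ^ k) v ∈ V (j + k) := by
  induction k with
  | zero => simpa using hv
  | succ k ih =>
    rw [pow_succ', Module.End.mul_apply, Nat.cast_succ, ← add_assoc]
    exact h.raise_mem _ _ ih

theorem lower_pow_apply_mem (h : IsSl2Grading m V e f) (k : ℕ) {j : ℤ} {v : M}
    (hv : v ∈ V (j + k)) : (f ^ k) v ∈ V j := by
  induction k generalizing j v with
  | zero => simpa using hv
  | succ k ih =>
    rw [pow_succ, Module.End.mul_apply]
    exact ih (h.lower_mem _ _ (by rwa [Nat.cast_succ, ← add_assoc] at hv))

theorem lower_pow_succ_apply (h : IsSl2Grading m V e f) (k : ℕ) {j : ℤ} {v : M}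
    (hv : v ∈ V j) :
    f ((e ^ (k + 1)) v) =
      (e ^ (k + 1)) (f v) + (((k : R) + 1) * (m - 2 * j - k)) • (e ^ k) v := by
  induction k with
  | zero => simpa [sub_eq_iff_eq_add'] using h.lower_raise_sub j v hv
  | succ k ih =>
    have hcomm := h.lower_raise_sub _ _ (h.pow_apply_mem (k + 1) hv)
    rw [sub_eq_iff_eq_add'] at hcomm
    rw [pow_succ' e (k + 1), Module.End.mul_apply, hcomm, ih, map_add, map_smul,
      ← Module.End.mul_apply e, ← pow_succ', ← Module.End.mul_apply e, ← pow_succ', add_assoc,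
      ← add_smul]
    congr 2
    push_cast
    ring

theorem reverse (h : IsSl2Grading m V e f) (htop : ∀ v ∈ V m, e v = 0) :
    IsSl2Grading m (fun j => V (m - j)) f e where
  lower_eq_zero v hv := htop v (by simpa using hv)
  raise_mem j v hv := h.lower_mem _ v (by rwa [sub_add_eq_sub_sub, sub_add_cancel])
  lower_mem j v hv := by simpa [sub_add_eq_sub_sub] using h.raise_mem _ v hv
  lower_raise_sub j v hv := by
    rw [← neg_sub, h.lower_raise_sub _ v hv, ← neg_smul]
    congr 1
    push_cast
    ring

section Field

variable {K : Type*} [Field K] [CharZero K] [Module K M] {V : ℤ → Submodule K M}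
  {e f : Module.End K M}

theorem eq_zero_of_lower_eq_zero (h : IsSl2Grading m V e f) {i k : ℕ} (hik : 2 * i + k ≤ m)
    {v : M} (hv : v ∈ V i) (hfv : f v = 0) (hkv : (e ^ k) v = 0) : v = 0 := by
  induction k with
  | zero => simpa using hkv
  | succ k ih =>
    refine ih (by omega) ?_
    have hcoeff : ((k : K) + 1) * (m - 2 * (i : ℤ) - k) ≠ 0 := by
      have : ((k + 1) * ((m : ℤ) - 2 * i - k) : ℤ) ≠ 0 := mul_ne_zero (by omega) (by omega)
      exact_mod_cast this
    have := h.lower_pow_succ_apply k hv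
    rw [hkv, hfv, map_zero, map_zero, zero_add, eq_comm, smul_eq_zero] at this
    exact this.resolve_left hcoeff

theorem eq_zero_of_pow_apply_eq_zero (h : IsSl2Grading m V e f) {i d : ℕ} (hid : 2 * i + d ≤ m)
    {v : M} (hv : v ∈ V i) (hdv : (e ^ d) v = 0) : v = 0 := by
  induction i using Nat.strong_induction_on generalizing d v with
  | _ i ih =>
    refine h.eq_zero_of_lower_eq_zero hid hv ?_ hdv
    rcases i with _ | i
    · exact h.lower_eq_zero v hv
    rcases d with _ | k
    · simp [show v = 0 by simpa using hdv]
    have hfv : f v ∈ V i := h.lower_mem i v (by exact_mod_cast hv)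
    refine ih i (by omega) (d := k + 2) (by omega) hfv ?_
    -- apply `e` to the commutation formula, in which `e ^ (k + 1) v = 0`
    have := congrArg e (h.lower_pow_succ_apply k hv)
    rw [hdv, map_zero, map_zero, map_add, map_smul, ← Module.End.mul_apply e, ← pow_succ',
      ← Module.End.mul_apply e (e ^ k), ← pow_succ', hdv, smul_zero, add_zero] at this
    exact this.symm

end Field

end IsSl2Grading

theorem Finset.sum_sum_erase_eq_sum_sum_compl_insert {α M : Type*} [Fintype α] [DecidableEq α]
    [AddCommMonoid M] (g : Finset α → Finset α → M) :
    ∑ T, ∑ k ∈ T, g (T.erase k) T = ∑ S, ∑ k ∈ Sᶜ, g S (insert k S) := by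
  rw [Finset.sum_sigma', Finset.sum_sigma']
  refine Finset.sum_bij' (fun p _ => ⟨p.1.erase p.2, p.2⟩) (fun p _ => ⟨insert p.2 p.1, p.2⟩)
    ?_ ?_ ?_ ?_ ?_ <;> simp +contextual

section Duality

variable {ι : Type*} (R : Type*) [CommRing R]

def vanishingOn (s : Set ι) : Submodule R (ι → R) :=
  Submodule.pi s fun _ => ⊥

variable {R}

theorem mem_vanishingOn {s : Set ι} {x : ι → R} : x ∈ vanishingOn R s ↔ ∀ i ∈ s, x i = 0 := by
  simp [vanishingOn, Submodule.mem_pi]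

variable [Fintype ι]

theorem pow_apply_dotProduct {A B : Module.End R (ι → R)} (hAB : ∀ x y, A x ⬝ᵥ y = x ⬝ᵥ B y)
    (d : ℕ) (x y : ι → R) : (A ^ d) x ⬝ᵥ y = x ⬝ᵥ (B ^ d) y := by
  induction d generalizing x with
  | zero => rfl
  | succ d ih =>
    rw [pow_succ, Module.End.mul_apply, ih, hAB, ← Module.End.mul_apply, ← pow_succ']

variable [DecidableEq ι] {K : Type*} [Field K]

theorem exists_apply_eq_of_adjoint_injOn {A B : Module.End K (ι → K)}
    (hAB : ∀ x y, A x ⬝ᵥ y = x ⬝ᵥ B y) {s t : Set ι}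
    (hA : ∀ x ∈ vanishingOn K s, A x ∈ vanishingOn K t)
    (hB : ∀ y ∈ vanishingOn K t, B y ∈ vanishingOn K s)
    (hB_inj : ∀ y ∈ vanishingOn K t, B y = 0 → y = 0)
    {y : ι → K} (hy : y ∈ vanishingOn K t) : ∃ x ∈ vanishingOn K s, A x = y := by
  by_contra! hne
  have hyW : y ∉ (vanishingOn K s).map A := by
    rintro ⟨x, hx, rfl⟩
    exact hne x hx rfl
  obtain ⟨φ, hφy, hφW⟩ := Submodule.exists_dual_map_eq_bot_of_notMem hyW inferInstance
  set w := (dotProductEquiv K ι).symm φ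
  have hφ : ∀ u, φ u = w ⬝ᵥ u := fun u => by
    rw [← LinearEquiv.apply_symm_apply (dotProductEquiv K ι) φ]
    rfl
  set z := Set.indicator tᶜ w
  have hz : z ∈ vanishingOn K t :=
    mem_vanishingOn.2 fun i hi => Set.indicator_of_notMem (Set.notMem_compl_iff.2 hi) w
  have hφz : ∀ u ∈ vanishingOn K t, φ u = z ⬝ᵥ u := by
    intro u hu
    rw [hφ, dotProduct, dotProduct]
    refine Finset.sum_congr rfl fun i _ => ?_
    by_cases hi : i ∈ t
    · simp [mem_vanishingOn.1 hu i hi]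
    · simp [z, hi]
  have hBz : B z = 0 := by
    funext i
    by_cases hi : i ∈ s
    · exact mem_vanishingOn.1 (hB z hz) i hi
    have hsingle : Pi.single i 1 ∈ vanishingOn K s :=
      mem_vanishingOn.2 fun j hj => Pi.single_eq_of_ne (ne_of_mem_of_not_mem hj hi) 1
    have hφA : φ (A (Pi.single i 1)) = 0 := by
      have := Submodule.mem_map_of_mem (f := φ) (Submodule.mem_map_of_mem (f := A) hsingle)
      rwa [hφW, Submodule.mem_bot] at this
    rw [hφz _ (hA _ hsingle), dotProduct_comm, hAB, dotProduct_comm, dotProduct_single,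
      mul_one] at hφA
    exact hφA
  exact hφy (by rw [hφz y hy, hB_inj z hz hBz, zero_dotProduct])

end Duality

namespace BooleanLattice

variable (σ R : Type*) [CommRing R]

def level (n : ℤ) : Submodule R (Finset σ → R) :=
  vanishingOn R {S | (S.card : ℤ) ≠ n}

variable {σ R}

theorem mem_level {n : ℤ} {x : Finset σ → R} :
    x ∈ level σ R n ↔ ∀ S : Finset σ, (S.card : ℤ) ≠ n → x S = 0 :=
  mem_vanishingOn

theorem level_eq_bot [Fintype σ] {n : ℤ} (hn : n < 0 ∨ Fintype.card σ < n) :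
    level σ R n = ⊥ := by
  refine (Submodule.eq_bot_iff _).2 fun x hx => funext fun S => mem_level.1 hx S ?_
  have := S.card_le_univ
  omega

variable (σ R) [DecidableEq σ]

def up : Module.End R (Finset σ → R) :=
  LinearMap.pi fun T => ∑ k ∈ T, LinearMap.proj (T.erase k)

variable {σ R}

@[simp]
theorem up_apply (x : Finset σ → R) (T : Finset σ) : up σ R x T = ∑ k ∈ T, x (T.erase k) := by
  simp [up]

theorem up_mem_level {n : ℤ} {x : Finset σ → R} (hx : x ∈ level σ R n) :
    up σ R x ∈ level σ R (n + 1) := by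
  refine mem_level.2 fun T hT => ?_
  rw [up_apply]
  refine Finset.sum_eq_zero fun k hk => mem_level.1 hx _ ?_
  have := Finset.card_pos.2 ⟨k, hk⟩
  rw [Finset.card_erase_of_mem hk]
  omega

variable (σ R) [Fintype σ]

def down : Module.End R (Finset σ → R) :=
  LinearMap.pi fun S => ∑ k ∈ Sᶜ, LinearMap.proj (insert k S)

variable {σ R}

@[simp]
theorem down_apply (x : Finset σ → R) (S : Finset σ) :
    down σ R x S = ∑ k ∈ Sᶜ, x (insert k S) := by
  simp [down]

theorem down_mem_level {n : ℤ} {x : Finset σ → R} (hx : x ∈ level σ R (n + 1)) :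
    down σ R x ∈ level σ R n := by
  refine mem_level.2 fun S hS => ?_
  rw [down_apply]
  refine Finset.sum_eq_zero fun k hk => mem_level.1 hx _ ?_
  rw [Finset.card_insert_of_notMem (Finset.mem_compl.1 hk)]
  omega

theorem down_up_sub_up_down_apply (x : Finset σ → R) (S : Finset σ) :
    down σ R (up σ R x) S - up σ R (down σ R x) S =
      ((Fintype.card σ : R) - 2 * S.card) * x S := by
  have hdu : down σ R (up σ R x) S = ∑ k ∈ Sᶜ, (x S + ∑ j ∈ S, x (insert k (S.erase j))) := by
    rw [down_apply]
    refine Finset.sum_congr rfl fun k hk => ?_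
    rw [Finset.mem_compl] at hk
    rw [up_apply, Finset.sum_insert hk, Finset.erase_insert hk]
    congr 1
    refine Finset.sum_congr rfl fun j hj => ?_
    rw [Finset.erase_insert_of_ne (ne_of_mem_of_not_mem hj hk).symm]
  have hud : up σ R (down σ R x) S = ∑ j ∈ S, (x S + ∑ k ∈ Sᶜ, x (insert k (S.erase j))) := by
    rw [up_apply]
    refine Finset.sum_congr rfl fun j hj => ?_
    rw [down_apply, Finset.compl_erase, Finset.sum_insert (by simpa using hj),
      Finset.insert_erase hj]
  rw [hdu, hud, Finset.sum_add_distrib, Finset.sum_add_distrib, Finset.sum_comm (s := Sᶜ),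
    Finset.sum_const, Finset.sum_const, Finset.card_compl, nsmul_eq_mul, nsmul_eq_mul,
    Nat.cast_sub S.card_le_univ]
  ring

theorem isSl2Grading_level :
    IsSl2Grading (Fintype.card σ) (level σ R) (up σ R) (down σ R) where
  lower_eq_zero v hv := by
    have := down_mem_level (n := -1) (by simpa using hv)
    rwa [level_eq_bot (by omega), Submodule.mem_bot] at this
  raise_mem _ _ := up_mem_level
  lower_mem _ _ := down_mem_level
  lower_raise_sub j v hv := funext fun S => by
    rw [Pi.sub_apply, down_up_sub_up_down_apply, Pi.smul_apply, smul_eq_mul]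
    by_cases hS : (S.card : ℤ) = j
    · rw [← hS, Int.cast_natCast]
    · rw [mem_level.1 hv S hS, mul_zero, mul_zero]

theorem up_dotProduct (x y : Finset σ → R) : up σ R x ⬝ᵥ y = x ⬝ᵥ down σ R y := by
  simp only [dotProduct, up_apply, down_apply, Finset.sum_mul, Finset.mul_sum]
  exact Finset.sum_sum_erase_eq_sum_sum_compl_insert fun S T => x S * y T

theorem up_eq_zero_of_mem_level_card {x : Finset σ → R} (hx : x ∈ level σ R (Fintype.card σ)) :
    up σ R x = 0 := by
  have := up_mem_level hx
  rwa [level_eq_bot (by omega), Submodule.mem_bot] at this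

variable {K : Type*} [Field K] [CharZero K]

theorem eq_zero_of_up_pow_eq_zero {i d : ℕ} (h : 2 * i + d ≤ Fintype.card σ)
    {x : Finset σ → K} (hx : x ∈ level σ K i) (hd : (up σ K ^ d) x = 0) : x = 0 :=
  isSl2Grading_level.eq_zero_of_pow_apply_eq_zero h hx hd

theorem eq_zero_of_down_pow_eq_zero {j d : ℕ} (h : Fintype.card σ + d ≤ 2 * j)
    {y : Finset σ → K} (hy : y ∈ level σ K j) (hd : (down σ K ^ d) y = 0) : y = 0 := by
  by_cases hj : j ≤ Fintype.card σ
  · have hrev := (isSl2Grading_level (σ := σ) (R := K)).reverse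
      fun _ => up_eq_zero_of_mem_level_card
    refine hrev.eq_zero_of_pow_apply_eq_zero (i := Fintype.card σ - j) (by omega) ?_ hd
    simpa [Nat.cast_sub hj] using hy
  · rwa [level_eq_bot (by omega), Submodule.mem_bot] at hy

theorem exists_up_pow_eq {i d : ℕ} (h : Fintype.card σ ≤ 2 * i + d) {y : Finset σ → K}
    (hy : y ∈ level σ K (i + d)) : ∃ x ∈ level σ K i, (up σ K ^ d) x = y := by
  have hup : ∀ x ∈ level σ K i, (up σ K ^ d) x ∈ level σ K (i + d) := fun x hx =>
    isSl2Grading_level.pow_apply_mem d hx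
  have hdown : ∀ y ∈ level σ K (i + d), (down σ K ^ d) y ∈ level σ K i := fun y hy =>
    isSl2Grading_level.lower_pow_apply_mem d hy
  have hinj : ∀ y ∈ level σ K (i + d), (down σ K ^ d) y = 0 → y = 0 := fun y hy =>
    eq_zero_of_down_pow_eq_zero (j := i + d) (by omega) (by rwa [Nat.cast_add])
  exact exists_apply_eq_of_adjoint_injOn (pow_apply_dotProduct up_dotProduct d) hup hdown hinj hy

end BooleanLattice

section SquarefreeMonomial

variable {σ : Type*}

noncomputable def squarefreeExponent (S : Finset σ) : σ →₀ ℕ :=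
  Finsupp.indicator S fun _ _ => 1

theorem squarefreeExponent_apply [DecidableEq σ] (S : Finset σ) (k : σ) :
    squarefreeExponent S k = if k ∈ S then 1 else 0 := by
  simp [squarefreeExponent, Finsupp.indicator_apply]

theorem support_squarefreeExponent (S : Finset σ) : (squarefreeExponent S).support = S := by
  classical
  ext k
  simp [squarefreeExponent_apply]

theorem squarefreeExponent_injective : Function.Injective (squarefreeExponent (σ := σ)) :=
  fun S T h => by rw [← support_squarefreeExponent S, h, support_squarefreeExponent]

theorem degree_squarefreeExponent (S : Finset σ) : (squarefreeExponent S).degree = S.card := by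
  classical
  rw [Finsupp.degree_apply, support_squarefreeExponent, Finset.card_eq_sum_ones]
  exact Finset.sum_congr rfl fun k hk => by simp [squarefreeExponent_apply, hk]

theorem squarefreeExponent_insert [DecidableEq σ] {k : σ} {S : Finset σ} (hk : k ∉ S) :
    squarefreeExponent (insert k S) = Finsupp.single k 1 + squarefreeExponent S := by
  ext j
  by_cases hj : j = k
  · simp [squarefreeExponent_apply, hj, hk]
  · simp [squarefreeExponent_apply, hj]

theorem squarefreeExponent_support {μ : σ →₀ ℕ} (hμ : ∀ k, μ k ≤ 1) :
    squarefreeExponent μ.support = μ := by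
  classical
  ext k
  rcases Nat.le_one_iff_eq_zero_or_eq_one.1 (hμ k) with hk | hk <;>
    simp [squarefreeExponent_apply, hk]

variable (σ R : Type*) [CommRing R]

noncomputable def squareIdeal : Ideal (MvPolynomial σ R) :=
  Ideal.span (Set.range fun k : σ => (X k : MvPolynomial σ R) ^ 2)

noncomputable def squarefreeMonomial (S : Finset σ) : MvPolynomial σ R :=
  monomial (squarefreeExponent S) 1

variable {σ R}

theorem mem_squareIdeal_iff {p : MvPolynomial σ R} :
    p ∈ squareIdeal σ R ↔ ∀ S : Finset σ, coeff (squarefreeExponent S) p = 0 := by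
  classical
  have hgen : Set.range (fun k : σ => (X k : MvPolynomial σ R) ^ 2) =
      (fun s => monomial s (1 : R)) '' Set.range fun k => Finsupp.single k 2 := by
    rw [← Set.range_comp]
    simp [Function.comp_def, X_pow_eq_monomial]
  rw [squareIdeal, hgen, mem_ideal_span_monomial_image]
  simp only [Set.mem_range, exists_exists_eq_and, Finsupp.single_le_iff, mem_support_iff]
  constructor
  · intro h S
    by_contra hS
    obtain ⟨k, hk⟩ := h _ hS
    have := squarefreeExponent_apply S k
    split_ifs at this <;> omega
  · intro h μ hμ
    by_contra! hsq
    exact hμ (squarefreeExponent_support (fun k => Nat.le_of_lt_succ (hsq k)) ▸ h _)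

theorem X_mul_squarefreeMonomial [DecidableEq σ] {k : σ} {S : Finset σ} (hk : k ∉ S) :
    X k * squarefreeMonomial σ R S = squarefreeMonomial σ R (insert k S) := by
  rw [squarefreeMonomial, squarefreeMonomial, squarefreeExponent_insert hk, X, monomial_mul,
    one_mul]

theorem X_mul_squarefreeMonomial_mem {k : σ} {S : Finset σ} (hk : k ∈ S) :
    X k * squarefreeMonomial σ R S ∈ squareIdeal σ R := by
  classical
  rw [← Finset.insert_erase hk, ← X_mul_squarefreeMonomial (Finset.notMem_erase k S),
    ← mul_assoc, ← sq, mul_comm]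
  exact Ideal.mul_mem_left _ _ (Ideal.subset_span ⟨k, rfl⟩)

theorem coeff_squarefreeMonomial [DecidableEq σ] (S T : Finset σ) :
    coeff (squarefreeExponent T) (squarefreeMonomial σ R S) = if S = T then 1 else 0 := by
  simp [squarefreeMonomial, coeff_monomial, squarefreeExponent_injective.eq_iff]

theorem isHomogeneous_squarefreeMonomial (S : Finset σ) :
    (squarefreeMonomial σ R S).IsHomogeneous S.card :=
  isHomogeneous_monomial _ (degree_squarefreeExponent S)

variable [Fintype σ]

theorem coeff_linearCombination_squarefreeMonomial (x : Finset σ → R) (T : Finset σ) :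
    coeff (squarefreeExponent T) (Fintype.linearCombination R (squarefreeMonomial σ R) x) =
      x T := by
  classical
  simp [Fintype.linearCombination_apply, coeff_sum, coeff_squarefreeMonomial]

theorem mk_sum_X_mul_squarefreeMonomial [DecidableEq σ] (S : Finset σ) :
    Ideal.Quotient.mk (squareIdeal σ R) ((∑ k, X k) * squarefreeMonomial σ R S) =
      ∑ k ∈ Sᶜ, Ideal.Quotient.mk (squareIdeal σ R) (squarefreeMonomial σ R (insert k S)) := by
  rw [Finset.sum_mul, map_sum, ← Finset.sum_add_sum_compl S, Finset.sum_eq_zero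
    fun k hk => Ideal.Quotient.eq_zero_iff_mem.2 (X_mul_squarefreeMonomial_mem hk), zero_add]
  exact Finset.sum_congr rfl fun k hk => by
    rw [X_mul_squarefreeMonomial (Finset.mem_compl.1 hk)]

end SquarefreeMonomial

section Quotient

variable (σ R : Type*) [Fintype σ] [CommRing R]

noncomputable def ofSquarefreeCoeffs : (Finset σ → R) →ₗ[R] MvPolynomial σ R ⧸ squareIdeal σ R :=
  (Ideal.Quotient.mkₐ R (squareIdeal σ R)).toLinearMap ∘ₗ
    Fintype.linearCombination R (squarefreeMonomial σ R)

variable {σ R}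

theorem ofSquarefreeCoeffs_apply (x : Finset σ → R) :
    ofSquarefreeCoeffs σ R x =
      ∑ S, x S • Ideal.Quotient.mk (squareIdeal σ R) (squarefreeMonomial σ R S) := by
  simp only [ofSquarefreeCoeffs, LinearMap.coe_comp, Function.comp_apply,
    Fintype.linearCombination_apply, map_sum, map_smul, AlgHom.toLinearMap_apply,
    Ideal.Quotient.mkₐ_eq_mk]

theorem ofSquarefreeCoeffs_injective : Function.Injective (ofSquarefreeCoeffs σ R) := by
  refine (injective_iff_map_eq_zero _).2 fun x hx => funext fun T => ?_
  have hmem := Ideal.Quotient.eq_zero_iff_mem.1 hx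
  rw [mem_squareIdeal_iff] at hmem
  simpa [coeff_linearCombination_squarefreeMonomial] using hmem T

theorem ofSquarefreeCoeffs_up [DecidableEq σ] (x : Finset σ → R) :
    ofSquarefreeCoeffs σ R (BooleanLattice.up σ R x) =
      Ideal.Quotient.mk _ (∑ k, X k) * ofSquarefreeCoeffs σ R x := by
  simp only [ofSquarefreeCoeffs_apply, BooleanLattice.up_apply, Finset.mul_sum, mul_smul_comm,
    ← map_mul, mk_sum_X_mul_squarefreeMonomial, Finset.sum_smul, Finset.smul_sum]
  exact Finset.sum_sum_erase_eq_sum_sum_compl_insert fun S T =>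
    x S • Ideal.Quotient.mk (squareIdeal σ R) (squarefreeMonomial σ R T)

theorem ofSquarefreeCoeffs_up_pow [DecidableEq σ] (d : ℕ) (x : Finset σ → R) :
    ofSquarefreeCoeffs σ R ((BooleanLattice.up σ R ^ d) x) =
      Ideal.Quotient.mk _ (∑ k, X k) ^ d * ofSquarefreeCoeffs σ R x := by
  induction d with
  | zero => simp
  | succ d ih =>
    rw [pow_succ', Module.End.mul_apply, ofSquarefreeCoeffs_up, ih, pow_succ', mul_assoc]

theorem map_level_ofSquarefreeCoeffs {K : Type*} [Field K] (n : ℕ) :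
    (BooleanLattice.level σ K n).map (ofSquarefreeCoeffs σ K) =
      gradedPiece (squareIdeal σ K) n := by
  ext y
  constructor
  · rintro ⟨x, hx, rfl⟩
    refine ⟨_, Submodule.sum_mem _ fun S _ => ?_, rfl⟩
    by_cases hS : S.card = n
    · exact Submodule.smul_mem _ _ (hS ▸ isHomogeneous_squarefreeMonomial S)
    · rw [BooleanLattice.mem_level.1 hx S (by exact_mod_cast hS), zero_smul]
      exact zero_mem _
  · rintro ⟨p, hp, rfl⟩
    refine ⟨fun S => coeff (squarefreeExponent S) p, BooleanLattice.mem_level.2 fun S hS => ?_, ?_⟩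
    · exact hp.coeff_eq_zero (by rw [degree_squarefreeExponent]; exact_mod_cast hS)
    · simp only [ofSquarefreeCoeffs, LinearMap.coe_comp, Function.comp_apply,
        AlgHom.toLinearMap_apply, Ideal.Quotient.mkₐ_eq_mk, Ideal.Quotient.mk_eq_mk_iff_sub_mem,
        mem_squareIdeal_iff, coeff_sub, coeff_linearCombination_squarefreeMonomial, sub_self,
        implies_true]

variable {K : Type*} [Field K] [CharZero K]

theorem eq_zero_of_mk_sum_X_pow_mul_eq_zero {i d : ℕ} (h : 2 * i + d ≤ Fintype.card σ)
    {x : MvPolynomial σ K ⧸ squareIdeal σ K} (hx : x ∈ gradedPiece (squareIdeal σ K) i)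
    (hx0 : Ideal.Quotient.mk _ (∑ k, X k) ^ d * x = 0) : x = 0 := by
  classical
  obtain ⟨v, hv, rfl⟩ := (map_level_ofSquarefreeCoeffs i).ge hx
  have hv0 : (BooleanLattice.up σ K ^ d) v = 0 :=
    ofSquarefreeCoeffs_injective (by rw [ofSquarefreeCoeffs_up_pow, hx0, map_zero])
  rw [BooleanLattice.eq_zero_of_up_pow_eq_zero h hv hv0, map_zero]

theorem exists_mk_sum_X_pow_mul_eq {i d : ℕ} (h : Fintype.card σ ≤ 2 * i + d)
    {y : MvPolynomial σ K ⧸ squareIdeal σ K} (hy : y ∈ gradedPiece (squareIdeal σ K) (i + d)) :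
    ∃ x ∈ gradedPiece (squareIdeal σ K) i, Ideal.Quotient.mk _ (∑ k, X k) ^ d * x = y := by
  classical
  obtain ⟨w, hw, rfl⟩ := (map_level_ofSquarefreeCoeffs (i + d)).ge hy
  obtain ⟨v, hv, rfl⟩ := BooleanLattice.exists_up_pow_eq (K := K) h (by exact_mod_cast hw)
  exact ⟨_, (map_level_ofSquarefreeCoeffs i).le (Submodule.mem_map_of_mem hv),
    (ofSquarefreeCoeffs_up_pow d v).symm⟩

end Quotient

/-- `D = K[y_1,…,y_m]/(y_1^2,…,y_m^2)` with `char K = 0` has the Strong Lefschetz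
Property: for `ℓ = y_1 + ⋯ + y_m`, every `d ≥ 1` and every `i`, the multiplication
map `·ℓ^d : D_i → D_{i+d}` has maximal rank (it is injective or surjective). -/
theorem stmt4 {K : Type*} [Field K] [CharZero K] (m : ℕ) :
    ∀ d : ℕ, 1 ≤ d → ∀ i : ℕ,
      (∀ x ∈ gradedPiece (K := K) (σ := Fin m)
          (Ideal.span (Set.range fun k : Fin m => (X k : MvPolynomial (Fin m) K) ^ 2)) i,
        (Ideal.Quotient.mk _ (∑ k : Fin m, (X k : MvPolynomial (Fin m) K))) ^ d * x = 0 → x = 0) ∨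
      (∀ y ∈ gradedPiece (K := K) (σ := Fin m)
          (Ideal.span (Set.range fun k : Fin m => (X k : MvPolynomial (Fin m) K) ^ 2)) (i + d),
        ∃ x ∈ gradedPiece (K := K) (σ := Fin m)
          (Ideal.span (Set.range fun k : Fin m => (X k : MvPolynomial (Fin m) K) ^ 2)) i,
        (Ideal.Quotient.mk _ (∑ k : Fin m, (X k : MvPolynomial (Fin m) K))) ^ d * x = y) := by
  intro d _ i
  rcases le_total (2 * i + d) m with h | h
  · exact Or.inl fun x hx => eq_zero_of_mk_sum_X_pow_mul_eq_zero (by simpa using h) hx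
  · exact Or.inr fun y hy => exists_mk_sum_X_pow_mul_eq (by simpa using h) hy
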